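/- arXiv:2106.10503 — 8 statements merged into one kernel-verified Lean document; each statement's English description precedes it below -/
import Mathlib

section
/- For all a, b > 0, the RSB density satisfies lim_{u→∞} u · (log u)^{1+b} · π_RSB(u; a, b) = 1/B(a,b); in particular the tail of π_RSB(·; a, b) is asymptotically equivalent to u^{-1}(log u)^{-(1+b)}/B(a,b). -/
open MeasureTheory Set Filter

/-- The Beta function `B(a,b) = Γ(a)Γ(b)/Γ(a+b)`. -/
noncomputable def betaFn (a b : ℝ) : ℝ :=
  Real.Gamma a * Real.Gamma b / Real.Gamma (a + b)

/-- The rescaled beta (RSB) density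
`π_RSB(u; a, b) = (1/B(a,b)) (log(1+u))^{a-1} (1+u)^{-1} (1+log(1+u))^{-(a+b)}`. -/
noncomputable def piRSB (a b u : ℝ) : ℝ :=
  (1 / betaFn a b) * (Real.log (1 + u)) ^ (a - 1) * (1 + u)⁻¹ *
    (1 + Real.log (1 + u)) ^ (-(a + b))

/-!
Substituting `L = log (1 + u)`, for `u ≥ 1` the quantity `u (log u)^{1+b} π_RSB(u; a, b)` factors as
`B(a,b)⁻¹ · u/(1+u) · (log u / L)^{1+b} · (L/(1+L))^{a+b}`.
Each ratio is of the form `g/f` with `f → ∞` and `f - g` convergent, so it tends to `1`, and the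
powers of these ratios tend to `1` for any fixed real exponents.
-/

open Real Topology

theorem Filter.Tendsto.div_tendsto_one_of_tendsto_sub {𝕜 α : Type*} [Field 𝕜] [LinearOrder 𝕜]
    [IsStrictOrderedRing 𝕜] [TopologicalSpace 𝕜] [OrderTopology 𝕜] {l : Filter α}
    {f g : α → 𝕜} {c : 𝕜} (hf : Tendsto f l atTop) (hfg : Tendsto (fun x => f x - g x) l (𝓝 c)) :
    Tendsto (fun x => g x / f x) l (𝓝 1) := by
  have h : Tendsto (fun x => 1 - (f x - g x) / f x) l (𝓝 (1 - 0)) :=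
    tendsto_const_nhds.sub (hfg.div_atTop hf)
  rw [sub_zero] at h
  refine h.congr' ?_
  filter_upwards [hf.eventually_ne_atTop 0] with x hx
  field_simp
  ring

theorem mul_log_rpow_mul_piRSB_eq (a b : ℝ) {u : ℝ} (hu : 1 ≤ u) :
    u * log u ^ (1 + b) * piRSB a b u =
      1 / betaFn a b * (u / (1 + u)) * (log u / log (1 + u)) ^ (1 + b) *
        (log (1 + u) / (1 + log (1 + u))) ^ (a + b) := by
  have hlog : 0 ≤ log u := log_nonneg hu
  set L := log (1 + u) with hL_def
  have hL : 0 < L := log_pos (by linarith)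
  have h1L : 0 < 1 + L := by linarith
  have hLa : L ^ (a - 1) = L ^ (a + b) / L ^ (1 + b) := by
    rw [← rpow_sub hL]
    ring_nf
  rw [piRSB, ← hL_def, div_rpow hlog hL.le, div_rpow hL.le h1L.le, rpow_neg h1L.le, hLa]
  have : 0 < 1 + u := by linarith
  field_simp

theorem rsb_tail_asymptotics_general (a b : ℝ) :
    Filter.Tendsto (fun u : ℝ => u * (Real.log u) ^ (1 + b) * piRSB a b u)
      Filter.atTop (nhds (1 / betaFn a b)) := by
  have h_one_add : Tendsto (fun u : ℝ => 1 + u) atTop atTop :=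
    tendsto_atTop_add_const_left _ 1 tendsto_id
  have h_log : Tendsto (fun u : ℝ => log (1 + u)) atTop atTop :=
    tendsto_log_atTop.comp h_one_add
  have h_lin : Tendsto (fun u : ℝ => u / (1 + u)) atTop (𝓝 1) :=
    h_one_add.div_tendsto_one_of_tendsto_sub (c := 1) (by simp)
  have h_log_ratio : Tendsto (fun u : ℝ => log u / log (1 + u)) atTop (𝓝 1) :=
    h_log.div_tendsto_one_of_tendsto_sub (by simpa [add_comm] using tendsto_log_comp_add_sub_log 1)
  have h_log_one_add : Tendsto (fun u : ℝ => log (1 + u) / (1 + log (1 + u))) atTop (𝓝 1) :=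
    (tendsto_atTop_add_const_left _ 1 h_log).div_tendsto_one_of_tendsto_sub (c := 1) (by simp)
  have h_prod := ((h_lin.const_mul (1 / betaFn a b)).mul
    (h_log_ratio.rpow_const (p := 1 + b) (Or.inl one_ne_zero))).mul
      (h_log_one_add.rpow_const (p := a + b) (Or.inl one_ne_zero))
  simp only [mul_one, one_rpow] at h_prod
  refine h_prod.congr' ?_
  filter_upwards [eventually_ge_atTop 1] with u hu
  exact (mul_log_rpow_mul_piRSB_eq a b hu).symm

/-- For all `a, b > 0`, `u (log u)^{1+b} π_RSB(u; a, b) → 1/B(a,b)` as `u → ∞`;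
i.e. the tail of the RSB density is asymptotically `u⁻¹ (log u)^{-(1+b)} / B(a,b)`. -/
theorem rsb_tail_asymptotics (a b : ℝ) (ha : 0 < a) (hb : 0 < b) :
    Filter.Tendsto (fun u : ℝ => u * (Real.log u) ^ (1 + b) * piRSB a b u)
      Filter.atTop (nhds (1 / betaFn a b)) :=
  rsb_tail_asymptotics_general a b
end

section
/- (Theorem 1) For all a ∈ (0,1), b > 0, and u > 0, the RSB density has the integral expression π_RSB(u; a, b) = (1/B(a,b)) ∫₀^∞ ∫₀^∞ ∫₀^∞ e^{-v u} · (v^{x+y} e^{-v} / Γ(x+y+1)) · (x^{-a} / Γ(1-a)) · (y^{a+b-1} e^{-y} / Γ(a+b)) dv dx dy; equivalently, π_RSB(u; a, b) = ∫₀^∞ ∫₀^∞ ∫₀^∞ v e^{-v u} · (v^{x+y-1} e^{-v} / Γ(x+y)) · g(x,y) dv dx dy with g(x,y) = x^{-a} y^{a+b-1} e^{-y} / (B(a,b) Γ(1-a) Γ(a+b) (x+y)). -/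
open MeasureTheory Set Filter

/-- The joint density `g(x,y)` of the latent pair in Theorem 1. -/
noncomputable def gLatent (a b x y : ℝ) : ℝ :=
  x ^ (-a) * y ^ (a + b - 1) * Real.exp (-y) /
    (betaFn a b * Real.Gamma (1 - a) * Real.Gamma (a + b) * (x + y))

open Real

/-!
Every integral is a Gamma integral `∫₀^∞ t^(s-1) e^(-r t) dt = Γ(s) r^(-s)`.
With `L = log (1 + u)`, integrating out `v` gives `(1 + u)^(-(x+y+1)) = e^(-L x) e^(-L y) / (1+u)`;
integrating out `x` against `x^(-a)` then gives `L^(a-1)`, and integrating out `y` against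
`y^(a+b-1) e^(-y) e^(-L y)` gives `(1 + L)^(-(a+b))`. The second representation is the first one
rewritten with `Γ(s + 1) = s Γ(s)`.
-/

theorem integral_rpow_mul_exp_neg_mul_div_Gamma {s r : ℝ} (hs : 0 < s) (hr : 0 < r) :
    ∫ t in Ioi (0 : ℝ), t ^ (s - 1) * exp (-(r * t)) / Gamma s = r ^ (-s) := by
  rw [integral_div, integral_rpow_mul_exp_neg_mul_Ioi hs hr,
    mul_div_cancel_right₀ _ (Gamma_pos_of_pos hs).ne', one_div, inv_rpow hr.le, rpow_neg hr.le]

theorem integral_exp_neg_mul_mul_gamma_density {s r : ℝ} (hs : 0 < s) (hr : -1 < r) :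
    ∫ t in Ioi (0 : ℝ), exp (-(t * r)) * (t ^ (s - 1) * exp (-t) / Gamma s)
      = (1 + r) ^ (-s) := by
  rw [← integral_rpow_mul_exp_neg_mul_div_Gamma hs (by linarith : 0 < 1 + r)]
  refine setIntegral_congr_fun measurableSet_Ioi fun t _ => ?_
  rw [show -((1 + r) * t) = -(t * r) + -t by ring, exp_add]
  ring

theorem integral_exp_neg_mul_mul_gamma_density_add_one {s r : ℝ} (hs : -1 < s) (hr : -1 < r) :
    ∫ t in Ioi (0 : ℝ), exp (-(t * r)) * (t ^ s * exp (-t) / Gamma (s + 1))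
      = (1 + r) ^ (-(s + 1)) := by
  simpa using integral_exp_neg_mul_mul_gamma_density (by linarith : 0 < s + 1) hr

theorem rsb_triple_integral_eq {a b u : ℝ} (ha : a < 1) (hab : 0 < a + b) (hu : 0 < u) :
    ∫ y in Ioi (0 : ℝ), ∫ x in Ioi (0 : ℝ), ∫ v in Ioi (0 : ℝ),
        exp (-(v * u)) * (v ^ (x + y) * exp (-v) / Gamma (x + y + 1)) *
          (x ^ (-a) / Gamma (1 - a)) * (y ^ (a + b - 1) * exp (-y) / Gamma (a + b))
      = log (1 + u) ^ (a - 1) * (1 + u)⁻¹ * (1 + log (1 + u)) ^ (-(a + b)) := by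
  set L := log (1 + u)
  have hL : 0 < L := log_pos (by linarith)
  have hpow (t : ℝ) : (1 + u) ^ (-t) = exp (-(t * L)) := by
    rw [rpow_def_of_pos (by linarith), mul_comm, neg_mul]
  calc _ = ∫ y in Ioi (0 : ℝ), ∫ x in Ioi (0 : ℝ),
          x ^ (1 - a - 1) * exp (-(L * x)) / Gamma (1 - a) *
            ((1 + u)⁻¹ * (exp (-(y * L)) * (y ^ (a + b - 1) * exp (-y) / Gamma (a + b)))) := by
        refine setIntegral_congr_fun measurableSet_Ioi fun y (hy : 0 < y) => ?_
        refine setIntegral_congr_fun measurableSet_Ioi fun x (hx : 0 < x) => ?_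
        have hxy : -1 < x + y := by linarith
        simp only [integral_mul_const]
        rw [integral_exp_neg_mul_mul_gamma_density_add_one hxy (by linarith),
          show -(x + y + 1) = -x + -y + -1 by ring, rpow_add (by linarith), rpow_add (by linarith),
          rpow_neg_one, hpow, hpow, sub_sub_cancel_left, mul_comm L x]
        ring
    _ = ∫ y in Ioi (0 : ℝ), L ^ (-(1 - a)) * ((1 + u)⁻¹ *
          (exp (-(y * L)) * (y ^ (a + b - 1) * exp (-y) / Gamma (a + b)))) := by
        simp only [integral_mul_const, integral_rpow_mul_exp_neg_mul_div_Gamma (sub_pos.2 ha) hL]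
    _ = _ := by
        rw [integral_const_mul, integral_const_mul,
          integral_exp_neg_mul_mul_gamma_density hab (by linarith), neg_sub]
        ring

theorem integral_gLatent_eq_inv_betaFn_mul (a b u : ℝ) :
    ∫ y in Ioi (0 : ℝ), ∫ x in Ioi (0 : ℝ), ∫ v in Ioi (0 : ℝ),
        v * exp (-(v * u)) * (v ^ (x + y - 1) * exp (-v) / Gamma (x + y)) * gLatent a b x y
      = (betaFn a b)⁻¹ * ∫ y in Ioi (0 : ℝ), ∫ x in Ioi (0 : ℝ), ∫ v in Ioi (0 : ℝ),
        exp (-(v * u)) * (v ^ (x + y) * exp (-v) / Gamma (x + y + 1)) *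
          (x ^ (-a) / Gamma (1 - a)) * (y ^ (a + b - 1) * exp (-y) / Gamma (a + b)) := by
  simp only [← integral_const_mul]
  refine setIntegral_congr_fun measurableSet_Ioi fun y (hy : 0 < y) => ?_
  refine setIntegral_congr_fun measurableSet_Ioi fun x (hx : 0 < x) => ?_
  refine setIntegral_congr_fun measurableSet_Ioi fun v (hv : 0 < v) => ?_
  have hxy : 0 < x + y := add_pos hx hy
  rw [gLatent, Gamma_add_one hxy.ne', rpow_sub_one hv.ne']
  field_simp [hv.ne', (Gamma_pos_of_pos hxy).ne']

/-- (Theorem 1) For `a ∈ (0,1)`, `b > 0`, `u > 0`, the RSB density has the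
triple-integral (mixture-of-exponentials) representation. -/
theorem rsb_integral_representation (a b u : ℝ) (ha : a ∈ Set.Ioo (0 : ℝ) 1)
    (hb : 0 < b) (hu : 0 < u) :
    (piRSB a b u
      = (1 / betaFn a b) *
          ∫ y in Set.Ioi (0 : ℝ), ∫ x in Set.Ioi (0 : ℝ), ∫ v in Set.Ioi (0 : ℝ),
            Real.exp (-(v * u)) * (v ^ (x + y) * Real.exp (-v) / Real.Gamma (x + y + 1)) *
              (x ^ (-a) / Real.Gamma (1 - a)) *
              (y ^ (a + b - 1) * Real.exp (-y) / Real.Gamma (a + b)))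
    ∧ (piRSB a b u
      = ∫ y in Set.Ioi (0 : ℝ), ∫ x in Set.Ioi (0 : ℝ), ∫ v in Set.Ioi (0 : ℝ),
          v * Real.exp (-(v * u)) * (v ^ (x + y - 1) * Real.exp (-v) / Real.Gamma (x + y)) *
            gLatent a b x y) := by
  have hab : 0 < a + b := by linarith [ha.1]
  rw [integral_gLatent_eq_inv_betaFn_mul, rsb_triple_integral_eq ha.2 hab hu, piRSB]
  constructor <;> ring
end

section
/- For all a ∈ (0,1), b > 0, and all u, v, x, y > 0, the following pointwise factorization identity holds: v e^{-v u} · (v^{x+y-1} e^{-v} / Γ(x+y)) · g(x,y) = π_RSB(u; a, b) · ((1+u)^{x+y+1} v^{x+y} e^{-(1+u)v} / Γ(x+y+1)) · ((log(1+u))^{1-a} x^{-a} e^{-x log(1+u)} / Γ(1-a)) · ((1+log(1+u))^{a+b} y^{a+b-1} e^{-(1+log(1+u)) y} / Γ(a+b)), where g(x,y) = x^{-a} y^{a+b-1} e^{-y} / (B(a,b) Γ(1-a) Γ(a+b) (x+y)). (This identity expresses the full conditional distribution of the latent variables (v,x,y) given u as a product of three Gamma densities.) -/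
/-!
Write `L = log (1 + u)`. The identity is pure bookkeeping once three facts are seen:
`(1 + u) ^ (x + y) = e^{x L} e^{y L}`, so the weight `(1 + u) ^ (x + y + 1)` of the `v`-factor is
cancelled by the tilts `e^{-x L}` and `e^{-y L}` of the `x`- and `y`-factors; the powers of `L` and
`1 + L` in those factors cancel the ones in `π_RSB`; and `Γ(x + y + 1) = (x + y) Γ(x + y)` absorbs
the factor `1 / (x + y)` of `g`.
-/

open MeasureTheory Set Filter

open Real

theorem Real.rpow_add_eq_exp_mul_exp {t : ℝ} (ht : 0 < t) (x y : ℝ) :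
    t ^ (x + y) = exp (x * log t) * exp (y * log t) := by
  rw [rpow_def_of_pos ht, ← exp_add]
  ring_nf

theorem Real.exp_neg_one_add_mul (c t : ℝ) :
    exp (-((1 + c) * t)) = exp (-t) * exp (-(t * c)) := by
  rw [← exp_add]
  ring_nf

theorem rsb_latent_factorization_general (a b u v x y : ℝ)
    (hu : 0 < u) (hv : 0 < v) (hx : 0 < x) (hy : 0 < y) :
    v * Real.exp (-(v * u)) * (v ^ (x + y - 1) * Real.exp (-v) / Real.Gamma (x + y)) *
        gLatent a b x y
      = piRSB a b u *
          ((1 + u) ^ (x + y + 1) * v ^ (x + y) * Real.exp (-((1 + u) * v)) /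
            Real.Gamma (x + y + 1)) *
          ((Real.log (1 + u)) ^ (1 - a) * x ^ (-a) * Real.exp (-(x * Real.log (1 + u))) /
            Real.Gamma (1 - a)) *
          ((1 + Real.log (1 + u)) ^ (a + b) * y ^ (a + b - 1) *
            Real.exp (-((1 + Real.log (1 + u)) * y)) / Real.Gamma (a + b)) := by
  have h1u : 0 < 1 + u := by linarith
  have hL : 0 < log (1 + u) := log_pos (by linarith)
  unfold piRSB gLatent
  rw [Gamma_add_one (by positivity), rpow_sub_one hv.ne', rpow_add_one h1u.ne',
    rpow_add_eq_exp_mul_exp h1u, exp_neg_one_add_mul, exp_neg_one_add_mul,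
    show 1 - a = -(a - 1) by ring, rpow_neg hL.le, rpow_neg (by positivity : 0 ≤ 1 + log (1 + u))]
  simp only [exp_neg]
  field_simp

/-- The pointwise factorization of the joint density of `(u, v, x, y)` as the RSB
marginal of `u` times three Gamma densities: the full conditional of `(v,x,y)`
given `u` is `Ga(x+y+1, 1+u) × Ga(1-a, log(1+u)) × Ga(a+b, 1+log(1+u))`. -/
theorem rsb_latent_factorization (a b u v x y : ℝ) (ha : a ∈ Set.Ioo (0 : ℝ) 1)
    (hb : 0 < b) (hu : 0 < u) (hv : 0 < v) (hx : 0 < x) (hy : 0 < y) :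
    v * Real.exp (-(v * u)) * (v ^ (x + y - 1) * Real.exp (-v) / Real.Gamma (x + y)) *
        gLatent a b x y
      = piRSB a b u *
          ((1 + u) ^ (x + y + 1) * v ^ (x + y) * Real.exp (-((1 + u) * v)) /
            Real.Gamma (x + y + 1)) *
          ((Real.log (1 + u)) ^ (1 - a) * x ^ (-a) * Real.exp (-(x * Real.log (1 + u))) /
            Real.Gamma (1 - a)) *
          ((1 + Real.log (1 + u)) ^ (a + b) * y ^ (a + b - 1) *
            Real.exp (-((1 + Real.log (1 + u)) * y)) / Real.Gamma (a + b)) :=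
  rsb_latent_factorization_general a b u v x y hu hv hx hy
end

section
/- For all a ∈ (0,1), b > 0, and u > 0, the RSB density is the marginal of the hierarchical model u|v ~ Exponential(v), v|z ~ Gamma(z,1), z|w ~ Gamma(b,w), w ~ Beta(a, 1-a): π_RSB(u; a, b) = ∫₀^1 ∫₀^∞ ∫₀^∞ v e^{-v u} · (v^{z-1} e^{-v} / Γ(z)) · (w^{b} z^{b-1} e^{-w z} / Γ(b)) · (w^{a-1} (1-w)^{-a} / B(a, 1-a)) dv dz dw. -/
/-!
Integrating out the layers one at a time: `v` against the exponential likelihood leaves the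
Lomax density `z (1+u)^{-(z+1)} = z (1+u)^{-1} e^{-z log(1+u)}`, which combines with the
`Gamma(b, w)` density of `z` into a Gamma integral equal to
`b w^b (1+u)^{-1} (w + log(1+u))^{-(b+1)}`. The remaining `w`-integral is a Beta integral
with a shifted kernel `(w + L)^{-(p+q)}`, which the Möbius substitution `w = L t / (1 + L - t)`
reduces to `B(p, q) L^{-q} (1+L)^{-p}`; with `p = a + b`, `q = 1 - a` the Gamma factors
collapse to `1 / B(a, b)`.
-/

open MeasureTheory Set Filter

open Real

lemma integral_Ioo_rpow_mul_one_sub_rpow {p q : ℝ} (hp : 0 < p) (hq : 0 < q) :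
    ∫ x in Ioo (0 : ℝ) 1, x ^ (p - 1) * (1 - x) ^ (q - 1) = betaFn p q := by
  have hcomplex : Complex.betaIntegral p q
      = ((∫ x in (0 : ℝ)..1, x ^ (p - 1) * (1 - x) ^ (q - 1) : ℝ) : ℂ) := by
    rw [Complex.betaIntegral, ← intervalIntegral.integral_ofReal]
    refine intervalIntegral.integral_congr fun x hx => ?_
    rw [uIcc_of_le zero_le_one] at hx
    simp only [Complex.ofReal_mul,
      Complex.ofReal_cpow hx.1, Complex.ofReal_cpow (sub_nonneg.2 hx.2)]
    push_cast
    rfl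
  rw [← integral_Ioc_eq_integral_Ioo, ← intervalIntegral.integral_of_le zero_le_one,
    show betaFn p q = _ from ProbabilityTheory.beta_eq_betaIntegralReal p q hp hq, hcomplex,
    Complex.ofReal_re]

section BetaSubst

variable {L : ℝ}

/-- The Möbius substitution `t ↦ w = L t / (1 + L - t)`, an increasing bijection of `(0, 1)`
that turns `(w + L)^{-(p+q)}` into a power of `1 + L - t` cancelling the Jacobian. -/
noncomputable def betaSubst (L t : ℝ) : ℝ := L * t / (1 + L - t)

lemma hasDerivAt_betaSubst {t : ℝ} (ht : t ≠ 1 + L) :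
    HasDerivAt (betaSubst L) (L * (1 + L) / (1 + L - t) ^ 2) t := by
  have hD : 1 + L - t ≠ 0 := sub_ne_zero.2 (Ne.symm ht)
  refine (((hasDerivAt_id' t).const_mul L).div ((hasDerivAt_id' t).const_sub (1 + L)) hD
    ).congr_deriv ?_
  ring

lemma strictMonoOn_betaSubst (hL : 0 < L) : StrictMonoOn (betaSubst L) (Icc 0 1) := by
  intro s hs t ht hst
  have hDs : 0 < 1 + L - s := by linarith [hs.2]
  have hDt : 0 < 1 + L - t := by linarith [ht.2]
  rw [betaSubst, betaSubst, div_lt_div_iff₀ hDs hDt]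
  nlinarith [mul_pos hL (by linarith : 0 < 1 + L)]

lemma betaSubst_image_Ioo (hL : 0 < L) : betaSubst L '' Ioo 0 1 = Ioo 0 1 := by
  have hcont : ContinuousOn (betaSubst L) (Icc 0 1) :=
    fun t ht => (hasDerivAt_betaSubst (by linarith [ht.2])).continuousAt.continuousWithinAt
  rw [hcont.image_Ioo_of_strictMonoOn zero_le_one (strictMonoOn_betaSubst hL)]
  simp [betaSubst, hL.ne']

lemma integral_Ioo_rpow_mul_one_sub_rpow_mul_add_rpow {p q : ℝ} (hp : 0 < p) (hq : 0 < q)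
    (hL : 0 < L) :
    ∫ w in Ioo (0 : ℝ) 1, w ^ (p - 1) * (1 - w) ^ (q - 1) * (w + L) ^ (-(p + q))
      = betaFn p q * L ^ (-q) * (1 + L) ^ (-p) := by
  have hderiv : ∀ t ∈ Ioo (0 : ℝ) 1,
      HasDerivWithinAt (betaSubst L) (L * (1 + L) / (1 + L - t) ^ 2) (Ioo 0 1) t :=
    fun t ht => (hasDerivAt_betaSubst (by linarith [ht.2])).hasDerivWithinAt
  have hmono : MonotoneOn (betaSubst L) (Ioo 0 1) :=
    (strictMonoOn_betaSubst hL).monotoneOn.mono Ioo_subset_Icc_self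
  have hpointwise : ∀ t ∈ Ioo (0 : ℝ) 1,
      (L * (1 + L) / (1 + L - t) ^ 2) •
        (betaSubst L t ^ (p - 1) * (1 - betaSubst L t) ^ (q - 1) * (betaSubst L t + L) ^ (-(p + q)))
      = L ^ (-q) * (1 + L) ^ (-p) * (t ^ (p - 1) * (1 - t) ^ (q - 1)) := by
    rintro t ⟨ht0, ht1⟩
    have hD : 0 < 1 + L - t := by linarith
    have hs : 0 < 1 - t := by linarith
    have hM : 0 < 1 + L := by linarith
    have hone_sub : 1 - betaSubst L t = (1 + L) * (1 - t) / (1 + L - t) := by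
      rw [betaSubst]; field_simp; ring
    have hadd : betaSubst L t + L = L * (1 + L) / (1 + L - t) := by
      rw [betaSubst]; field_simp; ring
    rw [smul_eq_mul, hone_sub, hadd, betaSubst]
    -- turn the positive compound bases into atoms, so that `positivity` can use `hD`, `hs`, `hM`
    generalize 1 + L - t = D at *
    generalize 1 - t = s at *
    generalize 1 + L = M at *
    refine log_injOn_pos (by rw [mem_Ioi]; positivity) (by rw [mem_Ioi]; positivity) ?_
    simp (disch := positivity) only [log_mul, log_div, log_rpow, log_pow]
    ring
  rw [← betaSubst_image_Ioo hL,
    integral_image_eq_integral_deriv_smul_of_monotoneOn measurableSet_Ioo hderiv hmono,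
    setIntegral_congr_fun measurableSet_Ioo hpointwise, integral_const_mul,
    integral_Ioo_rpow_mul_one_sub_rpow hp hq]
  ring

end BetaSubst

lemma integral_exponential_mul_gamma {z u : ℝ} (hz : 0 < z) (hu : 0 < 1 + u) :
    ∫ v in Ioi (0 : ℝ), v * exp (-(v * u)) * (v ^ (z - 1) * exp (-v) / Gamma z)
      = z * (1 + u) ^ (-(z + 1)) := by
  have hintegrand : ∀ v ∈ Ioi (0 : ℝ), v * exp (-(v * u)) * (v ^ (z - 1) * exp (-v) / Gamma z)
      = (Gamma z)⁻¹ * (v ^ (z + 1 - 1) * exp (-((1 + u) * v))) := by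
    rintro v (hv : 0 < v)
    rw [add_sub_cancel_right, rpow_sub_one hv.ne',
      show -((1 + u) * v) = -(v * u) + -v by ring, exp_add]
    field_simp
  rw [setIntegral_congr_fun measurableSet_Ioi hintegrand, integral_const_mul,
    integral_rpow_mul_exp_neg_mul_Ioi (by linarith) hu, Gamma_add_one hz.ne', one_div,
    inv_rpow hu.le, ← rpow_neg hu.le]
  field_simp [(Gamma_pos_of_pos hz).ne']

lemma integral_lomax_mul_gamma {w u b : ℝ} (hb : 0 < b) (hu : 0 < 1 + u)
    (hw : 0 < w + log (1 + u)) :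
    ∫ z in Ioi (0 : ℝ), z * (1 + u) ^ (-(z + 1)) *
        (w ^ b * z ^ (b - 1) * exp (-(w * z)) / Gamma b)
      = b * w ^ b * (1 + u)⁻¹ * (w + log (1 + u)) ^ (-(b + 1)) := by
  have hintegrand : ∀ z ∈ Ioi (0 : ℝ), z * (1 + u) ^ (-(z + 1)) *
        (w ^ b * z ^ (b - 1) * exp (-(w * z)) / Gamma b)
      = (w ^ b * (1 + u)⁻¹ / Gamma b) *
          (z ^ (b + 1 - 1) * exp (-((w + log (1 + u)) * z))) := by
    rintro z (hz : 0 < z)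
    rw [add_sub_cancel_right, rpow_sub_one hz.ne', neg_add', rpow_sub_one hu.ne',
      rpow_def_of_pos hu, show -((w + log (1 + u)) * z) = -(w * z) + log (1 + u) * -z by ring,
      exp_add]
    field_simp
  rw [setIntegral_congr_fun measurableSet_Ioi hintegrand, integral_const_mul,
    integral_rpow_mul_exp_neg_mul_Ioi (by linarith) hw, Gamma_add_one hb.ne', one_div,
    inv_rpow hw.le, ← rpow_neg hw.le]
  field_simp [(Gamma_pos_of_pos hb).ne']

lemma one_div_betaFn_eq_mul_betaFn_add_div {a b : ℝ} (ha : a ∈ Ioo (0 : ℝ) 1) (hb : 0 < b) :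
    1 / betaFn a b = b * betaFn (a + b) (1 - a) / betaFn a (1 - a) := by
  have hGa := Gamma_pos_of_pos ha.1
  have hGa' := Gamma_pos_of_pos (sub_pos.2 ha.2)
  have hGb := Gamma_pos_of_pos hb
  have hGab := Gamma_pos_of_pos (add_pos ha.1 hb)
  rw [betaFn, betaFn, betaFn, add_sub_cancel, Gamma_one,
    show a + b + (1 - a) = b + 1 by ring, Gamma_add_one hb.ne']
  field_simp

/-- For `a ∈ (0,1)`, `b > 0`, `u > 0`, the RSB density is the marginal of the
hierarchical model `u|v ~ Ex(v)`, `v|z ~ Ga(z,1)`, `z|w ~ Ga(b,w)`, `w ~ Be(a,1-a)`. -/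
theorem rsb_hierarchical_representation (a b u : ℝ) (ha : a ∈ Set.Ioo (0 : ℝ) 1)
    (hb : 0 < b) (hu : 0 < u) :
    piRSB a b u
      = ∫ w in Set.Ioo (0 : ℝ) 1, ∫ z in Set.Ioi (0 : ℝ), ∫ v in Set.Ioi (0 : ℝ),
          v * Real.exp (-(v * u)) * (v ^ (z - 1) * Real.exp (-v) / Real.Gamma z) *
            (w ^ b * z ^ (b - 1) * Real.exp (-(w * z)) / Real.Gamma b) *
            (w ^ (a - 1) * (1 - w) ^ (-a) / betaFn a (1 - a)) := by
  have hu1 : 0 < 1 + u := by linarith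
  have hL : 0 < log (1 + u) := log_pos (by linarith)
  symm
  calc _ = ∫ w in Ioo (0 : ℝ) 1, b * (1 + u)⁻¹ / betaFn a (1 - a) *
          (w ^ (a + b - 1) * (1 - w) ^ (1 - a - 1) * (w + log (1 + u)) ^ (-(a + b + (1 - a)))) := by
        refine setIntegral_congr_fun measurableSet_Ioo fun w (hw : 0 < w ∧ w < 1) => ?_
        simp_rw [integral_mul_const]
        rw [setIntegral_congr_fun measurableSet_Ioi
            fun z (hz : 0 < z) => by rw [integral_exponential_mul_gamma hz hu1],
          integral_lomax_mul_gamma hb hu1 (by linarith), show a + b - 1 = b + (a - 1) by ring,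
          rpow_add hw.1, show 1 - a - 1 = -a by ring, show a + b + (1 - a) = b + 1 by ring]
        ring
    _ = b * (1 + u)⁻¹ / betaFn a (1 - a) *
          (betaFn (a + b) (1 - a) * log (1 + u) ^ (-(1 - a)) * (1 + log (1 + u)) ^ (-(a + b))) := by
        rw [integral_const_mul, integral_Ioo_rpow_mul_one_sub_rpow_mul_add_rpow
          (by linarith [ha.1]) (by linarith [ha.2]) hL]
    _ = piRSB a b u := by
        rw [piRSB, neg_sub, one_div_betaFn_eq_mul_betaFn_add_div ha hb]
        ring
end

section
/- For all a, b > 0, the mean of the RSB distribution is infinite: ∫₀^∞ u · π_RSB(u; a, b) du = ∞. -/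
/-!
Put `L = log (1 + u)`. Up to factors tending to positive constants, `u² π_RSB(u)` is
`(1 + u) / (1 + L)^(b+1) = e^(x-1) / x^(b+1)` with `x = 1 + L → ∞`, which tends to infinity
because exponentials beat powers. Hence `u π_RSB(u) ≥ 1/u` for large `u`, and `1/u` is not
integrable at infinity.
-/

open MeasureTheory Set Filter

open Real Topology

lemma setLIntegral_Ioi_ofReal_eq_top_of_tendsto_mul_atTop {f : ℝ → ℝ}
    (hf : Tendsto (fun x => x * f x) atTop atTop) (a : ℝ) :
    ∫⁻ x in Ioi a, ENNReal.ofReal (f x) = ⊤ := by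
  obtain ⟨M, hM⟩ := eventually_atTop.mp
    ((hf.eventually_ge_atTop 1).and (eventually_gt_atTop (max a 0)))
  have hM₀ : 0 < M := (le_max_right a 0).trans_lt (hM M le_rfl).2
  have hinv : ∫⁻ x in Ioi M, ENNReal.ofReal x⁻¹ = ⊤ := by
    by_contra h
    refine not_integrableOn_Ioi_inv ((lintegral_ofReal_ne_top_iff_integrable
      measurable_inv.aestronglyMeasurable ?_).1 h)
    exact (ae_restrict_iff' measurableSet_Ioi).2 (ae_of_all _ fun x hx =>
      inv_nonneg.2 (hM₀.trans hx).le)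
  rw [eq_top_iff, ← hinv]
  calc ∫⁻ x in Ioi M, ENNReal.ofReal x⁻¹
      ≤ ∫⁻ x in Ioi M, ENNReal.ofReal (f x) := by
        refine setLIntegral_mono' measurableSet_Ioi fun x hx => ENNReal.ofReal_le_ofReal ?_
        have hx₀ : 0 < x := hM₀.trans hx
        rw [inv_le_iff_one_le_mul₀' hx₀]
        exact (hM x hx.le).1
    _ ≤ ∫⁻ x in Ioi a, ENNReal.ofReal (f x) :=
        lintegral_mono_set (Ioi_subset_Ioi ((le_max_left a 0).trans (hM M le_rfl).2.le))

lemma tendsto_div_one_add_self_atTop : Tendsto (fun x : ℝ => x / (1 + x)) atTop (𝓝 1) := by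
  have h : Tendsto (fun x : ℝ => (1 + x⁻¹)⁻¹) atTop (𝓝 1) := by
    simpa using (tendsto_inv_atTop_zero.const_add (1 : ℝ)).inv₀ (by norm_num)
  refine h.congr' ?_
  filter_upwards [eventually_gt_atTop 0] with x hx
  field_simp
  ring

lemma tendsto_one_add_div_one_add_log_rpow_atTop (s : ℝ) :
    Tendsto (fun x => (1 + x) / (1 + log (1 + x)) ^ s) atTop atTop := by
  have hlog : Tendsto (fun x => 1 + log (1 + x)) atTop atTop :=
    tendsto_atTop_add_const_left _ 1
      (tendsto_log_atTop.comp (tendsto_atTop_add_const_left _ 1 tendsto_id))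
  refine (((tendsto_exp_div_rpow_atTop s).comp hlog).const_mul_atTop
    (inv_pos.2 (exp_pos 1))).congr' ?_
  filter_upwards [eventually_gt_atTop (-1)] with x hx
  simp only [Function.comp_apply, exp_add, exp_log (by linarith : 0 < 1 + x)]
  field_simp

lemma mul_self_mul_piRSB_eq (a b : ℝ) {u : ℝ} (hu : 0 < u) :
    u * (u * piRSB a b u) = 1 / betaFn a b * ((u / (1 + u)) ^ 2 *
      ((log (1 + u) / (1 + log (1 + u))) ^ (a - 1) *
        ((1 + u) / (1 + log (1 + u)) ^ (b + 1)))) := by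
  have hL : 0 < log (1 + u) := log_pos (by linarith)
  have hL1 : 0 < 1 + log (1 + u) := by linarith
  rw [piRSB, div_rpow hL.le hL1.le, show -(a + b) = -((a - 1) + (b + 1)) by ring,
    rpow_neg hL1.le, rpow_add hL1]
  field_simp

lemma betaFn_pos {a b : ℝ} (ha : 0 < a) (hb : 0 < b) : 0 < betaFn a b :=
  div_pos (mul_pos (Gamma_pos_of_pos ha) (Gamma_pos_of_pos hb)) (Gamma_pos_of_pos (add_pos ha hb))

lemma tendsto_mul_self_mul_piRSB_atTop {a b : ℝ} (hB : 0 < betaFn a b) :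
    Tendsto (fun u => u * (u * piRSB a b u)) atTop atTop := by
  have hlog : Tendsto (fun u => log (1 + u)) atTop atTop :=
    tendsto_log_atTop.comp (tendsto_atTop_add_const_left _ 1 tendsto_id)
  have hlim : Tendsto (fun u => 1 / betaFn a b * ((u / (1 + u)) ^ 2 *
      (log (1 + u) / (1 + log (1 + u))) ^ (a - 1))) atTop (𝓝 (1 / betaFn a b)) := by
    simpa using ((tendsto_div_one_add_self_atTop.pow 2).mul
      ((tendsto_div_one_add_self_atTop.comp hlog).rpow_const (Or.inl one_ne_zero))).const_mul
      (1 / betaFn a b)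
  refine ((hlim.pos_mul_atTop (by positivity)
    (tendsto_one_add_div_one_add_log_rpow_atTop (b + 1)))).congr' ?_
  filter_upwards [eventually_gt_atTop 0] with u hu
  rw [mul_self_mul_piRSB_eq a b hu]
  ring

/-- For all `a, b > 0`, the mean of the RSB distribution is infinite:
`∫₀^∞ u π_RSB(u; a, b) du = ∞`. -/
theorem rsb_mean_infinite (a b : ℝ) (ha : 0 < a) (hb : 0 < b) :
    ∫⁻ u in Set.Ioi (0 : ℝ), ENNReal.ofReal (u * piRSB a b u) = ⊤ :=
  setLIntegral_Ioi_ofReal_eq_top_of_tendsto_mul_atTop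
    (tendsto_mul_self_mul_piRSB_atTop (betaFn_pos ha hb)) 0
end

section
/- Fix b > 0, λ > 0, and shape parameters 0 < a < 1 < a' < ∞. Then for every ε > 0, ∫₀^ε e^{-λ u} π_RSB(u; a, b) du / ∫₀^ε e^{-λ u} π_RSB(u; a', b) du ≥ (B(a', b) / B(a, b)) · (log(1+ε))^{a - a'} / ( e^{λ ε} (1+ε) (1 + log(1+ε))^{a+b} ). In particular, since a - a' < 0, this ratio tends to ∞ as ε → 0+. -/
/-!
On `(0, ε)` the two densities differ by the factor
`B(a',b)/B(a,b) · log(1+u)^(a-a') · (1 + log(1+u))^(a'-a)`, which for `a ≤ a'` is at least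
`B(a',b)/B(a,b) · log(1+ε)^(a-a')`. Integrating against `e^(-λu)` bounds the ratio below by this
quantity, which dominates the claimed bound (its extra denominator is `≥ 1`) and tends to `∞` as
`ε → 0⁺` because `a - a' < 0`. Integrability at `0` comes from `log(1+u)^(a-1) ≲ u^(a-1)`
with `a > 0`.
-/

open MeasureTheory Set Filter

open Real Topology

lemma div_one_add_le_log_one_add {u ε : ℝ} (hu : 0 ≤ u) (huε : u ≤ ε) :
    u / (1 + ε) ≤ log (1 + u) :=
  calc u / (1 + ε) ≤ 2 * u / (u + 2) := by
        rw [div_le_div_iff₀ (by linarith) (by linarith)]; nlinarith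
    _ ≤ log (1 + u) := le_log_one_add_of_nonneg hu

lemma rpow_log_one_add_le {s u ε : ℝ} (hu : 0 < u) (huε : u ≤ ε) :
    log (1 + u) ^ (s - 1) ≤ ((1 + ε) ^ (1 - s) + 1) * u ^ (s - 1) := by
  have hlog : 0 < log (1 + u) := log_pos (by linarith)
  have hu' : 0 ≤ u ^ (s - 1) := rpow_nonneg hu.le _
  rcases le_or_gt s 1 with hs | hs
  · have : log (1 + u) ^ (s - 1) ≤ (u / (1 + ε)) ^ (s - 1) :=
      rpow_le_rpow_of_nonpos (div_pos hu (by linarith)) (div_one_add_le_log_one_add hu.le huε)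
        (by linarith)
    rw [div_rpow hu.le (by linarith), div_eq_mul_inv, ← rpow_neg (by linarith), neg_sub] at this
    nlinarith
  · have : log (1 + u) ^ (s - 1) ≤ u ^ (s - 1) :=
      rpow_le_rpow hlog.le (by linarith [log_le_sub_one_of_pos (by linarith : 0 < 1 + u)])
        (by linarith)
    nlinarith [rpow_nonneg (by linarith : (0 : ℝ) ≤ 1 + ε) (1 - s)]

lemma integrableOn_rpow_log_one_add {s ε : ℝ} (hs : 0 < s) :
    IntegrableOn (fun u => log (1 + u) ^ (s - 1)) (Ioo 0 ε) := by
  have hdom : IntegrableOn (fun u => ((1 + ε) ^ (1 - s) + 1) * u ^ (s - 1)) (Ioo 0 ε) :=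
    (((intervalIntegral.intervalIntegrable_rpow' (by linarith)).const_mul _).def'.mono_set
      (Ioo_subset_Ioc_self.trans Ioc_subset_uIoc))
  refine hdom.mono' (by fun_prop : Measurable _).aestronglyMeasurable
    ((ae_restrict_iff' measurableSet_Ioo).2 (.of_forall ?_))
  intro u ⟨hu, huε⟩
  rw [norm_of_nonneg (rpow_nonneg (log_nonneg (by linarith)) _)]
  exact rpow_log_one_add_le hu huε.le

lemma piRSB_pos {a b u : ℝ} (ha : 0 < a) (hb : 0 < b) (hu : 0 < u) : 0 < piRSB a b u := by
  have := betaFn_pos ha hb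
  have := log_pos (by linarith : 1 < 1 + u)
  unfold piRSB
  positivity

lemma piRSB_le {a b u : ℝ} (ha : 0 < a) (hb : 0 < b) (hu : 0 < u) :
    piRSB a b u ≤ 1 / betaFn a b * log (1 + u) ^ (a - 1) := by
  have := betaFn_pos ha hb
  have hlog := log_pos (by linarith : 1 < 1 + u)
  have hinv : (1 + u)⁻¹ ≤ 1 := inv_le_one_of_one_le₀ (by linarith)
  have hpow : (1 + log (1 + u)) ^ (-(a + b)) ≤ 1 :=
    rpow_le_one_of_one_le_of_nonpos (by linarith) (by linarith)
  unfold piRSB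
  calc _ ≤ 1 / betaFn a b * log (1 + u) ^ (a - 1) * 1 * 1 := by gcongr
    _ = _ := by ring

lemma integrableOn_piRSB {a b ε : ℝ} (ha : 0 < a) (hb : 0 < b) :
    IntegrableOn (piRSB a b) (Ioo 0 ε) := by
  refine ((integrableOn_rpow_log_one_add ha).const_mul (1 / betaFn a b)).mono'
    (by unfold piRSB; fun_prop) ((ae_restrict_iff' measurableSet_Ioo).2 (.of_forall ?_))
  intro u ⟨hu, _⟩
  rw [norm_of_nonneg (piRSB_pos ha hb hu).le]
  exact piRSB_le ha hb hu

lemma integrableOn_exp_mul_piRSB {a b lam ε : ℝ} (ha : 0 < a) (hb : 0 < b) :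
    IntegrableOn (fun u => exp (-(lam * u)) * piRSB a b u) (Ioo 0 ε) :=
  (integrableOn_piRSB ha hb).continuousOn_mul_of_subset (K := Icc 0 ε) (by fun_prop)
    isCompact_Icc measurableSet_Ioo Ioo_subset_Icc_self

lemma setIntegral_exp_mul_piRSB_pos {a b lam ε : ℝ} (ha : 0 < a) (hb : 0 < b) (hε : 0 < ε) :
    0 < ∫ u in Ioo 0 ε, exp (-(lam * u)) * piRSB a b u := by
  have hpos : ∀ u ∈ Ioo 0 ε, 0 < exp (-(lam * u)) * piRSB a b u :=
    fun u hu => mul_pos (exp_pos _) (piRSB_pos ha hb hu.1)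
  rw [setIntegral_pos_iff_support_of_nonneg_ae
    ((ae_restrict_iff' measurableSet_Ioo).2 (.of_forall fun u hu => (hpos u hu).le))
    (integrableOn_exp_mul_piRSB ha hb),
    inter_eq_self_of_subset_right (s := Function.support _) fun u hu => (hpos u hu).ne',
    Real.volume_Ioo]
  simpa using hε

lemma piRSB_eq_mul_piRSB {a a' b u : ℝ} (hu : 0 < u) (hB : betaFn a' b ≠ 0) :
    piRSB a b u = betaFn a' b / betaFn a b * log (1 + u) ^ (a - a') *
      (1 + log (1 + u)) ^ (a' - a) * piRSB a' b u := by
  have hlog := log_pos (by linarith : 1 < 1 + u)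
  have h1 : log (1 + u) ^ (a - 1) = log (1 + u) ^ (a - a') * log (1 + u) ^ (a' - 1) := by
    rw [← rpow_add hlog]; ring_nf
  have h2 : (1 + log (1 + u)) ^ (-(a + b)) =
      (1 + log (1 + u)) ^ (a' - a) * (1 + log (1 + u)) ^ (-(a' + b)) := by
    rw [← rpow_add (by linarith)]; ring_nf
  unfold piRSB
  rw [h1, h2]
  field_simp

lemma mul_piRSB_le_piRSB {a a' b u ε : ℝ} (ha : 0 < a) (haa' : a ≤ a') (hb : 0 < b)
    (hu : 0 < u) (huε : u ≤ ε) :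
    betaFn a' b / betaFn a b * log (1 + ε) ^ (a - a') * piRSB a' b u ≤ piRSB a b u := by
  have hlog := log_pos (by linarith : 1 < 1 + u)
  have hB := betaFn_pos ha hb
  have hB' := betaFn_pos (ha.trans_le haa') hb
  have hp := piRSB_pos (ha.trans_le haa') hb hu
  have hL : log (1 + ε) ^ (a - a') ≤ log (1 + u) ^ (a - a') :=
    rpow_le_rpow_of_nonpos hlog (log_le_log (by linarith) (by linarith)) (by linarith)
  have hM : 1 ≤ (1 + log (1 + u)) ^ (a' - a) := one_le_rpow (by linarith) (by linarith)
  rw [piRSB_eq_mul_piRSB (a := a) hu hB'.ne']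
  calc _ ≤ betaFn a' b / betaFn a b * log (1 + u) ^ (a - a') * 1 * piRSB a' b u := by
        rw [mul_one]; gcongr
    _ ≤ _ := by gcongr

lemma mul_rpow_log_le_div_setIntegral {a a' b lam ε : ℝ} (ha : 0 < a) (haa' : a ≤ a')
    (hb : 0 < b) (hε : 0 < ε) :
    betaFn a' b / betaFn a b * log (1 + ε) ^ (a - a') ≤
      (∫ u in Ioo 0 ε, exp (-(lam * u)) * piRSB a b u) /
        ∫ u in Ioo 0 ε, exp (-(lam * u)) * piRSB a' b u := by
  have ha' : 0 < a' := ha.trans_le haa'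
  rw [le_div_iff₀ (setIntegral_exp_mul_piRSB_pos ha' hb hε), ← integral_const_mul]
  refine setIntegral_mono_on ((integrableOn_exp_mul_piRSB ha' hb).const_mul _)
    (integrableOn_exp_mul_piRSB ha hb) measurableSet_Ioo fun u hu => ?_
  rw [mul_left_comm]
  exact mul_le_mul_of_nonneg_left (mul_piRSB_le_piRSB ha haa' hb hu.1 hu.2.le) (exp_pos _).le

lemma tendsto_rpow_log_one_add_nhdsGT_zero {r : ℝ} (hr : r < 0) :
    Tendsto (fun ε => log (1 + ε) ^ r) (𝓝[>] 0) atTop := by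
  have hlog : Tendsto (fun ε => log (1 + ε)) (𝓝[>] 0) (𝓝[>] 0) := by
    refine tendsto_nhdsWithin_iff.2 ⟨?_, eventually_mem_nhdsWithin.mono fun ε hε =>
      log_pos (by linarith [mem_Ioi.1 hε])⟩
    have hcont : ContinuousAt (fun ε : ℝ => log (1 + ε)) 0 :=
      (continuousAt_const.add continuousAt_id).log (by norm_num)
    simpa using hcont.tendsto.mono_left nhdsWithin_le_nhds
  exact (tendsto_rpow_neg_nhdsGT_zero hr).comp hlog

/-- For `0 < a < 1 < a'`, the ratio of truncated Laplace-type integrals of RSB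
densities with shapes `a` and `a'` is bounded below by an explicit quantity that
diverges as `ε → 0⁺`. -/
theorem rsb_truncated_ratio_lower_bound (a a' b lam : ℝ) (hb : 0 < b) (hlam : 0 < lam)
    (ha : 0 < a) (ha1 : a < 1) (ha' : 1 < a') :
    (∀ ε : ℝ, 0 < ε →
      (∫ u in Set.Ioo (0 : ℝ) ε, Real.exp (-(lam * u)) * piRSB a b u) /
          (∫ u in Set.Ioo (0 : ℝ) ε, Real.exp (-(lam * u)) * piRSB a' b u)
        ≥ (betaFn a' b / betaFn a b) * (Real.log (1 + ε)) ^ (a - a') /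
            (Real.exp (lam * ε) * (1 + ε) * (1 + Real.log (1 + ε)) ^ (a + b)))
    ∧ Filter.Tendsto
        (fun ε : ℝ =>
          (∫ u in Set.Ioo (0 : ℝ) ε, Real.exp (-(lam * u)) * piRSB a b u) /
            (∫ u in Set.Ioo (0 : ℝ) ε, Real.exp (-(lam * u)) * piRSB a' b u))
        (nhdsWithin 0 (Set.Ioi 0)) Filter.atTop := by
  have hbound := fun ε (hε : 0 < ε) =>
    mul_rpow_log_le_div_setIntegral (lam := lam) ha (by linarith : a ≤ a') hb hε
  have hc : 0 < betaFn a' b / betaFn a b := div_pos (betaFn_pos (by linarith) hb) (betaFn_pos ha hb)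
  refine ⟨fun ε hε => (div_le_self ?_ ?_).trans (hbound ε hε), ?_⟩
  · have hlog := log_nonneg (by linarith : 1 ≤ 1 + ε)
    positivity
  · have hlog := log_nonneg (by linarith : 1 ≤ 1 + ε)
    refine one_le_mul_of_one_le_of_one_le (one_le_mul_of_one_le_of_one_le ?_ ?_) ?_
    · exact one_le_exp (by positivity)
    · linarith
    · exact one_le_rpow (by linarith) (by linarith)
  · exact tendsto_atTop_mono' _ (eventually_mem_nhdsWithin.mono hbound)
      ((tendsto_rpow_log_one_add_nhdsGT_zero (by linarith)).const_mul_atTop hc)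
end

section
/- (Lemma S1) Let b, δ ∈ ℝ and let π : (0,∞) → (0,∞) be a measurable integrable function such that π(u) · (1+u)^{1+δ} · (1 + log(1+u))^{1+b} converges to some constant C > 0 as u → ∞. Define f_π(y; z) = ∫₀^∞ π(u) · (e^z u)^y e^{-e^z u} / y! du for y ∈ ℕ and z ∈ ℝ. Then for every z ∈ ℝ, f_π(y; z) / f_π(y; 0) → e^{δ z} as y → ∞ along the natural numbers. -/
open MeasureTheory Set Filter

/-- The Poisson mixture mass function
`f_π(y; z) = ∫₀^∞ π(u) (e^z u)^y e^{-e^z u} / y! du`. -/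
noncomputable def poissonMix (p : ℝ → ℝ) (y : ℕ) (z : ℝ) : ℝ :=
  ∫ u in Set.Ioi (0 : ℝ),
    p u * ((Real.exp z * u) ^ y * Real.exp (-(Real.exp z * u)) / (Nat.factorial y : ℝ))

/-!
Substituting `v = e^z u` gives `f_π(y; z) = e^{-z} ∫ π(e^{-z} v) g_y(v) dv` with the Poisson
weight `g_y(v) = v^y e^{-v} / y!`. The tail condition makes `π` regularly varying of index
`-(1+δ)`, so `π(e^{-z} v) / π(v) → e^{(1+δ) z}`. As `y → ∞` the weights `g_y` move all their mass
to infinity relative to any positive integrable `π`: on `(0, M]` they are at most `M^y / y!`,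
while `∫ π g_y ≥ (2M)^y e^{-(2M+1)} / y! · ∫_{2M}^{2M+1} π`, so the part of the integrals over
`(0, M]` is negligible. Hence the ratio of the two mixtures tends to the limit
`e^{(1+δ) z}` of the ratio of the densities, and the factor `e^{-z}` leaves `e^{δ z}`.
-/

open Real Topology
open scoped Nat

theorem tendsto_comp_mul_div_of_tendsto_mul {p w : ℝ → ℝ} {C c r : ℝ} (hC : C ≠ 0)
    (hpw : Tendsto (fun u => p u * w u) atTop (𝓝 C)) (hc : 0 < c)
    (hw : Tendsto (fun v => w v / w (c * v)) atTop (𝓝 r)) (hw0 : ∀ᶠ v in atTop, w v ≠ 0) :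
    Tendsto (fun v => p (c * v) / p v) atTop (𝓝 r) := by
  have hmul : Tendsto (fun v => c * v) atTop atTop := tendsto_id.const_mul_atTop hc
  have h := ((hpw.comp hmul).div hpw hC).mul hw
  rw [div_self hC, one_mul] at h
  refine h.congr' ?_
  filter_upwards [hw0, hmul.eventually hw0] with v hv hcv
  simp only [Pi.div_apply, Function.comp_apply]
  rw [mul_div_mul_comm, mul_assoc, div_mul_div_cancel₀ hv, div_self hcv, mul_one]

theorem tendsto_one_add_div_one_add_mul {c : ℝ} (hc : 0 < c) :
    Tendsto (fun v : ℝ => (1 + v) / (1 + c * v)) atTop (𝓝 c⁻¹) := by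
  have hinv : Tendsto (fun v : ℝ => v⁻¹) atTop (𝓝 0) := tendsto_inv_atTop_zero
  have h := (hinv.add_const 1).div (hinv.add_const c) (by simpa using hc.ne')
  rw [zero_add, zero_add, one_div] at h
  refine h.congr' ?_
  filter_upwards [eventually_gt_atTop 0] with v hv
  rw [Pi.div_apply]
  field_simp

theorem tendsto_one_add_log_div_one_add_log_mul {c : ℝ} (hc : 0 < c) :
    Tendsto (fun v : ℝ => (1 + log (1 + v)) / (1 + log (1 + c * v))) atTop (𝓝 1) := by
  have hden : Tendsto (fun v : ℝ => 1 + log (1 + c * v)) atTop atTop :=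
    tendsto_atTop_add_const_left _ _ <| tendsto_log_atTop.comp <|
      tendsto_atTop_add_const_left _ _ (tendsto_id.const_mul_atTop hc)
  have hdiff : Tendsto (fun v : ℝ => log ((1 + v) / (1 + c * v))) atTop (𝓝 (log c⁻¹)) :=
    ((continuousAt_log (inv_ne_zero hc.ne')).tendsto).comp (tendsto_one_add_div_one_add_mul hc)
  have h := (hdiff.div_atTop hden).const_add 1
  rw [add_zero] at h
  refine h.congr' ?_
  filter_upwards [eventually_gt_atTop 0, hden.eventually_gt_atTop 0] with v hv hv'
  rw [log_div (by positivity) (by positivity), one_add_div hv'.ne']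
  ring_nf

noncomputable def tailWeight (δ b u : ℝ) : ℝ := (1 + u) ^ (1 + δ) * (1 + log (1 + u)) ^ (1 + b)

theorem tailWeight_pos (δ b : ℝ) {u : ℝ} (hu : 0 ≤ u) : 0 < tailWeight δ b u := by
  have : 0 ≤ log (1 + u) := log_nonneg (by linarith)
  unfold tailWeight
  positivity

theorem tendsto_tailWeight_div_comp_mul (δ b : ℝ) {c : ℝ} (hc : 0 < c) :
    Tendsto (fun v => tailWeight δ b v / tailWeight δ b (c * v)) atTop
      (𝓝 (c ^ (-(1 + δ)))) := by
  have h := ((tendsto_one_add_div_one_add_mul hc).rpow_const (p := 1 + δ)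
    (Or.inl (inv_ne_zero hc.ne'))).mul
    ((tendsto_one_add_log_div_one_add_log_mul hc).rpow_const (p := 1 + b) (Or.inl one_ne_zero))
  rw [one_rpow, mul_one, inv_rpow hc.le, ← rpow_neg hc.le] at h
  refine h.congr' ?_
  filter_upwards [eventually_ge_atTop 0] with v hv
  have hl : 0 ≤ log (1 + v) := log_nonneg (by linarith)
  have hcl : 0 ≤ log (1 + c * v) := log_nonneg (by nlinarith)
  rw [tailWeight, tailWeight, div_rpow (by positivity) (by positivity),
    div_rpow (by positivity) (by positivity), mul_div_mul_comm]

noncomputable def poissonWeight (y : ℕ) (v : ℝ) : ℝ := v ^ y * exp (-v) / y !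

theorem continuous_poissonWeight (y : ℕ) : Continuous (poissonWeight y) := by
  unfold poissonWeight; fun_prop

theorem poissonWeight_nonneg (y : ℕ) {v : ℝ} (hv : 0 ≤ v) : 0 ≤ poissonWeight y v := by
  unfold poissonWeight; positivity

theorem poissonWeight_le_one (y : ℕ) {v : ℝ} (hv : 0 ≤ v) : poissonWeight y v ≤ 1 := by
  calc poissonWeight y v = v ^ y / y ! * exp (-v) := by rw [poissonWeight]; ring
    _ ≤ exp v * exp (-v) := by gcongr; exact pow_div_factorial_le_exp v hv y
    _ = 1 := by rw [← exp_add, add_neg_cancel, exp_zero]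

theorem poissonWeight_le_pow_div_factorial (y : ℕ) {v M : ℝ} (hv : 0 ≤ v) (hvM : v ≤ M) :
    poissonWeight y v ≤ M ^ y / y ! := by
  have : exp (-v) ≤ 1 := exp_le_one_iff.mpr (by linarith)
  calc poissonWeight y v ≤ M ^ y * 1 / y ! := by
        unfold poissonWeight; gcongr; exact pow_nonneg (hv.trans hvM) y
    _ = M ^ y / y ! := by rw [mul_one]

theorem pow_mul_exp_neg_div_factorial_le_poissonWeight (y : ℕ) {v K : ℝ} (hK : 0 ≤ K)
    (hKv : K ≤ v) (hvK : v ≤ K + 1) : K ^ y * exp (-(K + 1)) / y ! ≤ poissonWeight y v := by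
  unfold poissonWeight; gcongr; exact pow_nonneg (hK.trans hKv) y

theorem integrableOn_mul_poissonWeight {f : ℝ → ℝ} (hf : IntegrableOn f (Ioi 0)) (y : ℕ) :
    IntegrableOn (fun v => f v * poissonWeight y v) (Ioi 0) := by
  refine Integrable.mul_bdd (c := 1) hf (continuous_poissonWeight y).aestronglyMeasurable ?_
  filter_upwards [ae_restrict_mem measurableSet_Ioi] with v hv
  rw [norm_of_nonneg (poissonWeight_nonneg y (le_of_lt hv))]
  exact poissonWeight_le_one y (le_of_lt hv)

theorem setIntegral_Ioc_pos {p : ℝ → ℝ} (hp : IntegrableOn p (Ioi 0))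
    (hpos : ∀ u, 0 < u → 0 < p u) {a b : ℝ} (ha : 0 ≤ a) (hab : a < b) :
    0 < ∫ v in Ioc a b, p v := by
  have hsub : Ioc a b ⊆ Ioi 0 := fun v hv => ha.trans_lt hv.1
  rw [setIntegral_pos_iff_support_of_nonneg_ae _ (hp.mono_set hsub)]
  · refine lt_of_lt_of_le ?_ (measure_mono fun v hv => ⟨(hpos v (hsub hv)).ne', hv⟩)
    simpa [Real.volume_Ioc] using hab
  · filter_upwards [ae_restrict_mem measurableSet_Ioc] with v hv
    exact (hpos v (hsub hv)).le

theorem setIntegral_Ioc_mul_poissonWeight_le {f : ℝ → ℝ} (hf : IntegrableOn f (Ioi 0))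
    {M : ℝ} (hM : 0 ≤ M) (y : ℕ) :
    ∫ v in Ioc 0 M, |f v| * poissonWeight y v ≤ M ^ y / y ! * ∫ v in Ioi 0, |f v| := by
  have hsub : Ioc 0 M ⊆ Ioi (0 : ℝ) := Ioc_subset_Ioi_self
  have hf' : IntegrableOn (fun v => |f v|) (Ioi 0) := hf.abs
  calc ∫ v in Ioc 0 M, |f v| * poissonWeight y v
      ≤ ∫ v in Ioc 0 M, |f v| * (M ^ y / y !) := by
        refine setIntegral_mono_on ((integrableOn_mul_poissonWeight hf' y).mono_set hsub)
          ((hf'.mono_set hsub).mul_const _) measurableSet_Ioc fun v hv => ?_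
        exact mul_le_mul_of_nonneg_left
          (poissonWeight_le_pow_div_factorial y hv.1.le hv.2) (abs_nonneg _)
    _ ≤ ∫ v in Ioi 0, |f v| * (M ^ y / y !) := by
        refine setIntegral_mono_set (hf'.mul_const _) ?_ hsub.eventuallyLE
        exact ae_of_all _ fun v => by positivity
    _ = M ^ y / y ! * ∫ v in Ioi 0, |f v| := by rw [integral_mul_const, mul_comm]

theorem mul_setIntegral_Ioc_le_integral_mul_poissonWeight {p : ℝ → ℝ}
    (hp : IntegrableOn p (Ioi 0)) (hp0 : ∀ u, 0 < u → 0 ≤ p u) {K : ℝ} (hK : 0 ≤ K) (y : ℕ) :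
    K ^ y * exp (-(K + 1)) / y ! * ∫ v in Ioc K (K + 1), p v ≤
      ∫ v in Ioi 0, p v * poissonWeight y v := by
  have hsub : Ioc K (K + 1) ⊆ Ioi 0 := fun v hv => hK.trans_lt hv.1
  calc K ^ y * exp (-(K + 1)) / y ! * ∫ v in Ioc K (K + 1), p v
      = ∫ v in Ioc K (K + 1), p v * (K ^ y * exp (-(K + 1)) / y !) := by
        rw [integral_mul_const, mul_comm]
    _ ≤ ∫ v in Ioc K (K + 1), p v * poissonWeight y v := by
        refine setIntegral_mono_on ((hp.mono_set hsub).mul_const _)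
          ((integrableOn_mul_poissonWeight hp y).mono_set hsub) measurableSet_Ioc fun v hv => ?_
        exact mul_le_mul_of_nonneg_left
          (pow_mul_exp_neg_div_factorial_le_poissonWeight y hK hv.1.le hv.2) (hp0 v (hsub hv))
    _ ≤ ∫ v in Ioi 0, p v * poissonWeight y v := by
        refine setIntegral_mono_set (integrableOn_mul_poissonWeight hp y) ?_ hsub.eventuallyLE
        filter_upwards [ae_restrict_mem measurableSet_Ioi] with v hv
        exact mul_nonneg (hp0 v hv) (poissonWeight_nonneg y (le_of_lt hv))

theorem integral_mul_poissonWeight_pos {p : ℝ → ℝ} (hp : IntegrableOn p (Ioi 0))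
    (hpos : ∀ u, 0 < u → 0 < p u) (y : ℕ) : 0 < ∫ v in Ioi 0, p v * poissonWeight y v := by
  refine lt_of_lt_of_le ?_ (mul_setIntegral_Ioc_le_integral_mul_poissonWeight hp
    (fun u hu => (hpos u hu).le) zero_le_one y)
  have := setIntegral_Ioc_pos hp hpos zero_le_one (lt_add_one 1)
  positivity

theorem tendsto_setIntegral_Ioc_mul_poissonWeight_div {f p : ℝ → ℝ}
    (hf : IntegrableOn f (Ioi 0)) (hp : IntegrableOn p (Ioi 0)) (hpos : ∀ u, 0 < u → 0 < p u)
    {M : ℝ} (hM : 0 < M) :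
    Tendsto (fun y : ℕ => (∫ v in Ioc 0 M, |f v| * poissonWeight y v) /
      ∫ v in Ioi 0, p v * poissonWeight y v) atTop (𝓝 0) := by
  set A := ∫ v in Ioi 0, |f v|
  set B := ∫ v in Ioc (2 * M) (2 * M + 1), p v
  have hA : 0 ≤ A := setIntegral_nonneg measurableSet_Ioi fun v _ => abs_nonneg _
  have hB : 0 < B := setIntegral_Ioc_pos hp hpos (by positivity) (lt_add_one _)
  have hgeom : Tendsto (fun y : ℕ => A * exp (2 * M + 1) / B * (1 / 2 : ℝ) ^ y) atTop (𝓝 0) := by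
    simpa using (tendsto_pow_atTop_nhds_zero_of_lt_one (r := (1 / 2 : ℝ)) (by norm_num)
      (by norm_num)).const_mul (A * exp (2 * M + 1) / B)
  refine squeeze_zero (fun y => ?_) (fun y => ?_) hgeom
  · exact div_nonneg (setIntegral_nonneg measurableSet_Ioc fun v hv =>
      mul_nonneg (abs_nonneg _) (poissonWeight_nonneg y hv.1.le))
      (integral_mul_poissonWeight_pos hp hpos y).le
  · have hy : (0 : ℝ) < y ! := by positivity
    calc _ ≤ M ^ y / y ! * A / ((2 * M) ^ y * exp (-(2 * M + 1)) / y ! * B) :=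
          div_le_div₀ (by positivity) (setIntegral_Ioc_mul_poissonWeight_le hf hM.le y)
            (by positivity) (mul_setIntegral_Ioc_le_integral_mul_poissonWeight hp
              (fun u hu => (hpos u hu).le) (by positivity) y)
      _ = A * exp (2 * M + 1) / B * (1 / 2 : ℝ) ^ y := by
          rw [mul_pow, exp_neg, div_pow, one_pow]
          field_simp

theorem abs_integral_sub_mul_integral_le {p q g : ℝ → ℝ} {L ε M : ℝ}
    (hpg : IntegrableOn (fun v => p v * g v) (Ioi 0))
    (hqg : IntegrableOn (fun v => q v * g v) (Ioi 0))
    (hp0 : ∀ v, 0 < v → 0 ≤ p v) (hg0 : ∀ v, 0 < v → 0 ≤ g v) (hM : 0 ≤ M) (hε : 0 ≤ ε)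
    (hbound : ∀ v, M < v → |q v - L * p v| ≤ ε * p v) :
    |(∫ v in Ioi 0, q v * g v) - L * ∫ v in Ioi 0, p v * g v| ≤
      (∫ v in Ioc 0 M, |q v - L * p v| * g v) + ε * ∫ v in Ioi 0, p v * g v := by
  set h : ℝ → ℝ := fun v => (q v - L * p v) * g v
  have hh : IntegrableOn h (Ioi 0) := by
    refine (hqg.sub (hpg.const_mul L)).congr (ae_of_all _ fun v => ?_)
    simp only [h, Pi.sub_apply]; ring
  have hsub₁ : Ioc 0 M ⊆ Ioi (0 : ℝ) := Ioc_subset_Ioi_self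
  have hsub₂ : Ioi M ⊆ Ioi (0 : ℝ) := Ioi_subset_Ioi hM
  have hnear : |∫ v in Ioc 0 M, h v| ≤ ∫ v in Ioc 0 M, |q v - L * p v| * g v := by
    rw [← Real.norm_eq_abs]
    refine norm_integral_le_of_norm_le ((IntegrableOn.mono_set hh.abs hsub₁).congr ?_) ?_ <;>
      filter_upwards [ae_restrict_mem measurableSet_Ioc] with v hv
    · rw [abs_mul, abs_of_nonneg (hg0 v hv.1)]
    · rw [Real.norm_eq_abs, abs_mul, abs_of_nonneg (hg0 v hv.1)]
  have hfar : |∫ v in Ioi M, h v| ≤ ε * ∫ v in Ioi 0, p v * g v := by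
    calc |∫ v in Ioi M, h v| ≤ ∫ v in Ioi M, ε * (p v * g v) := by
          rw [← Real.norm_eq_abs]
          refine norm_integral_le_of_norm_le ((hpg.mono_set hsub₂).const_mul ε) ?_
          filter_upwards [ae_restrict_mem measurableSet_Ioi] with v hv
          rw [Real.norm_eq_abs, abs_mul, abs_of_nonneg (hg0 v (hsub₂ hv)), ← mul_assoc]
          exact mul_le_mul_of_nonneg_right (hbound v hv) (hg0 v (hsub₂ hv))
      _ ≤ ∫ v in Ioi 0, ε * (p v * g v) := by
          refine setIntegral_mono_set (hpg.const_mul ε) ?_ hsub₂.eventuallyLE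
          filter_upwards [ae_restrict_mem measurableSet_Ioi] with v hv
          exact mul_nonneg hε (mul_nonneg (hp0 v hv) (hg0 v hv))
      _ = ε * ∫ v in Ioi 0, p v * g v := integral_const_mul ε _
  have hsplit : (∫ v in Ioi 0, q v * g v) - L * ∫ v in Ioi 0, p v * g v =
      (∫ v in Ioc 0 M, h v) + ∫ v in Ioi M, h v := by
    rw [← setIntegral_union (Ioc_disjoint_Ioi le_rfl) measurableSet_Ioi (hh.mono_set hsub₁)
      (hh.mono_set hsub₂), Ioc_union_Ioi_eq_Ioi hM, ← integral_const_mul,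
      ← integral_sub hqg (hpg.const_mul L)]
    exact setIntegral_congr_fun measurableSet_Ioi fun v _ => by simp only [h]; ring
  rw [hsplit]
  exact (abs_add_le _ _).trans (add_le_add hnear hfar)

theorem tendsto_integral_mul_poissonWeight_div {p q : ℝ → ℝ} {L : ℝ}
    (hp : IntegrableOn p (Ioi 0)) (hq : IntegrableOn q (Ioi 0)) (hpos : ∀ u, 0 < u → 0 < p u)
    (hqp : Tendsto (fun v => q v / p v) atTop (𝓝 L)) :
    Tendsto (fun y : ℕ => (∫ v in Ioi 0, q v * poissonWeight y v) /
      ∫ v in Ioi 0, p v * poissonWeight y v) atTop (𝓝 L) := by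
  rw [Metric.tendsto_nhds]
  intro ε hε
  obtain ⟨M, hM⟩ := ((Metric.tendsto_nhds.1 hqp (ε / 2) (half_pos hε)).and
    (eventually_gt_atTop 0)).exists_forall_of_atTop
  have hM0 : 0 < M := (hM M le_rfl).2
  have hbound : ∀ v, M < v → |q v - L * p v| ≤ ε / 2 * p v := by
    intro v hv
    have hpv := hpos v (hM0.trans hv)
    rw [show q v - L * p v = (q v / p v - L) * p v by field_simp, abs_mul, abs_of_pos hpv]
    exact mul_le_mul_of_nonneg_right (hM v hv.le).1.le hpv.le
  have hf : IntegrableOn (fun v => q v - L * p v) (Ioi 0) := hq.sub (hp.const_mul L)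
  have hnear := tendsto_setIntegral_Ioc_mul_poissonWeight_div hf hp hpos hM0
  filter_upwards [hnear.eventually (gt_mem_nhds (half_pos hε))] with y hy
  set J := ∫ v in Ioi 0, p v * poissonWeight y v
  have hJ : 0 < J := integral_mul_poissonWeight_pos hp hpos y
  rw [div_lt_iff₀ hJ] at hy
  rw [Real.dist_eq, div_sub' hJ.ne', abs_div, abs_of_pos hJ, div_lt_iff₀ hJ, mul_comm J L]
  calc _ ≤ (∫ v in Ioc 0 M, |q v - L * p v| * poissonWeight y v) + ε / 2 * J :=
        abs_integral_sub_mul_integral_le (integrableOn_mul_poissonWeight hp y)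
          (integrableOn_mul_poissonWeight hq y) (fun v hv => (hpos v hv).le)
          (fun v hv => poissonWeight_nonneg y hv.le) hM0.le (half_pos hε).le hbound
    _ < ε / 2 * J + ε / 2 * J := by gcongr
    _ = ε * J := by ring

theorem poissonMix_eq_integral_comp_mul (p : ℝ → ℝ) (y : ℕ) (z : ℝ) :
    poissonMix p y z = exp (-z) * ∫ v in Ioi 0, p (exp (-z) * v) * poissonWeight y v := by
  have h := integral_comp_mul_left_Ioi (fun v => p (exp (-z) * v) * poissonWeight y v) 0
    (exp_pos z)
  rw [mul_zero, smul_eq_mul, ← exp_neg] at h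
  rw [← h, poissonMix]
  congr with u
  rw [← mul_assoc, ← exp_add, neg_add_cancel, exp_zero, one_mul, poissonWeight]

theorem poissonMix_ratio_tendsto_general (b δ C : ℝ) (p : ℝ → ℝ)
    (hint : IntegrableOn p (Set.Ioi 0))
    (hpos : ∀ u : ℝ, 0 < u → 0 < p u) (hC : 0 < C)
    (htail : Filter.Tendsto
      (fun u : ℝ => p u * (1 + u) ^ (1 + δ) * (1 + Real.log (1 + u)) ^ (1 + b))
      Filter.atTop (nhds C)) :
    ∀ z : ℝ, Filter.Tendsto (fun y : ℕ => poissonMix p y z / poissonMix p y 0)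
      Filter.atTop (nhds (Real.exp (δ * z))) := by
  intro z
  have hc : 0 < exp (-z) := exp_pos _
  have hq : IntegrableOn (fun v => p (exp (-z) * v)) (Ioi 0) := by
    simpa using (integrableOn_Ioi_comp_mul_left_iff p 0 hc).2 (by simpa using hint)
  have hpw : Tendsto (fun u => p u * tailWeight δ b u) atTop (𝓝 C) := by
    simpa only [tailWeight, mul_assoc] using htail
  have hratio := tendsto_comp_mul_div_of_tendsto_mul hC.ne' hpw hc
    (tendsto_tailWeight_div_comp_mul δ b hc)
    ((eventually_ge_atTop 0).mono fun u hu => (tailWeight_pos δ b hu).ne')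
  have hlim := (tendsto_integral_mul_poissonWeight_div hint hq hpos hratio).const_mul (exp (-z))
  rw [← exp_mul, ← exp_add, show -z + -z * -(1 + δ) = δ * z by ring] at hlim
  refine hlim.congr fun y => ?_
  simp only [poissonMix_eq_integral_comp_mul p y, neg_zero, exp_zero, one_mul, mul_div_assoc]

/-- (Lemma S1) If the positive integrable density `p` has tail asymptotic to
`C (1+u)^{-(1+δ)} (1+log(1+u))^{-(1+b)}`, then `f_p(y; z)/f_p(y; 0) → e^{δ z}`
as `y → ∞`. -/
theorem poissonMix_ratio_tendsto (b δ C : ℝ) (p : ℝ → ℝ)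
    (hmeas : Measurable p) (hint : IntegrableOn p (Set.Ioi 0))
    (hpos : ∀ u : ℝ, 0 < u → 0 < p u) (hC : 0 < C)
    (htail : Filter.Tendsto
      (fun u : ℝ => p u * (1 + u) ^ (1 + δ) * (1 + Real.log (1 + u)) ^ (1 + b))
      Filter.atTop (nhds C)) :
    ∀ z : ℝ, Filter.Tendsto (fun y : ℕ => poissonMix p y z / poissonMix p y 0)
      Filter.atTop (nhds (Real.exp (δ * z))) :=
  poissonMix_ratio_tendsto_general b δ C p hint hpos hC htail
end

section
/- Let a > 0, b > 0, δ ≥ 0, and define g(u) = u^{a-1} (1+u)^{-(a+δ)} (1 + log(1+u))^{-(1+b)} for u > 0. Then for all u > 0 and all z ∈ ℝ, g(u e^{-z}) / ( g(u) e^{(1+δ) z} ) = ((1+u)/(e^z + u))^{a+δ} · ((1 + log(1+u)) / (1 + log(1 + u e^{-z})))^{1+b} ≤ (max{1, e^{-z}})^{a+δ} · (1 + log(1 + e^{z}))^{1+b}. -/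
/-- The RSB-type reference density shape
`g(u) = u^{a-1} (1+u)^{-(a+δ)} (1+log(1+u))^{-(1+b)}`. -/
noncomputable def gShape (a b δ u : ℝ) : ℝ :=
  u ^ (a - 1) * (1 + u) ^ (-(a + δ)) * (1 + Real.log (1 + u)) ^ (-(1 + b))

/-!
Writing `1 + u e^{-z} = e^{-z} (e^z + u)`, each factor of `g(u e^{-z})` is the matching factor of
`g(u)` times a power of `e^z` and a ratio; the powers of `e^z` collect to exactly `e^{(1+δ) z}`.
For the bound, `1 + u ≤ max{1, e^{-z}} (e^z + u)`, and
`1 + u ≤ (1 + e^z)(1 + u e^{-z})` gives `log(1+u) ≤ log(1+e^z) + log(1+u e^{-z})`, whence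
`1 + log(1+u) ≤ (1 + log(1+e^z))(1 + log(1+u e^{-z}))`.
-/

open Real

namespace Real

theorem rpow_neg_eq_rpow_neg_mul_div_rpow {x y : ℝ} (hx : 0 < x) (hy : 0 < y) (p : ℝ) :
    y ^ (-p) = x ^ (-p) * (x / y) ^ p := by
  have hxp : 0 < x ^ p := rpow_pos_of_pos hx p
  have hyp : 0 < y ^ p := rpow_pos_of_pos hy p
  rw [rpow_neg hx.le, rpow_neg hy.le, div_rpow hx.le hy.le]
  field_simp

theorem one_add_log_one_add_pos {u : ℝ} (hu : 0 ≤ u) : 0 < 1 + log (1 + u) :=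
  add_pos_of_pos_of_nonneg one_pos (log_nonneg (le_add_of_nonneg_right hu))

theorem one_add_mul_exp_neg (u z : ℝ) : 1 + u * exp (-z) = exp (-z) * (exp z + u) := by
  rw [mul_add, ← exp_add, neg_add_cancel, exp_zero, mul_comm]

theorem div_exp_add_le_max_one_exp_neg {u : ℝ} (hu : 0 ≤ u) (z : ℝ) :
    (1 + u) / (exp z + u) ≤ max 1 (exp (-z)) := by
  have hm_exp : 1 ≤ max 1 (exp (-z)) * exp z := by
    calc (1 : ℝ) = exp (-z) * exp z := by rw [← exp_add, neg_add_cancel, exp_zero]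
      _ ≤ max 1 (exp (-z)) * exp z := by gcongr; exact le_max_right _ _
  have hm_u : u ≤ max 1 (exp (-z)) * u := le_mul_of_one_le_left hu (le_max_left _ _)
  rw [div_le_iff₀ (by positivity)]
  linarith

theorem log_one_add_le_log_one_add_exp_add {u : ℝ} (hu : 0 ≤ u) (z : ℝ) :
    log (1 + u) ≤ log (1 + exp z) + log (1 + u * exp (-z)) := by
  have hprod : (1 + exp z) * (1 + u * exp (-z)) = 1 + u + exp z + u * exp (-z) := by
    have h : exp z * exp (-z) = 1 := by rw [← exp_add, add_neg_cancel, exp_zero]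
    linear_combination u * h
  rw [← log_mul (by positivity) (by positivity)]
  refine log_le_log (by linarith) ?_
  rw [hprod]
  linarith [exp_pos z, mul_nonneg hu (exp_pos (-z)).le]

theorem one_add_log_div_le {u : ℝ} (hu : 0 ≤ u) (z : ℝ) :
    (1 + log (1 + u)) / (1 + log (1 + u * exp (-z))) ≤ 1 + log (1 + exp z) := by
  have hue : 0 ≤ u * exp (-z) := mul_nonneg hu (exp_pos (-z)).le
  have hA : 0 ≤ log (1 + exp z) := log_nonneg (le_add_of_nonneg_right (exp_pos z).le)
  have hB : 0 ≤ log (1 + u * exp (-z)) := log_nonneg (le_add_of_nonneg_right hue)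
  rw [div_le_iff₀ (one_add_log_one_add_pos hue)]
  nlinarith [log_one_add_le_log_one_add_exp_add hu z]

end Real

theorem gShape_pos (a b δ : ℝ) {u : ℝ} (hu : 0 < u) : 0 < gShape a b δ u := by
  have := one_add_log_one_add_pos hu.le
  unfold gShape
  positivity

theorem gShape_mul_exp_neg (a b δ : ℝ) {u : ℝ} (hu : 0 < u) (z : ℝ) :
    gShape a b δ (u * exp (-z)) = gShape a b δ u * exp ((1 + δ) * z) *
      ((1 + u) / (exp z + u)) ^ (a + δ) *
      ((1 + log (1 + u)) / (1 + log (1 + u * exp (-z)))) ^ (1 + b) := by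
  have hexp : exp (-z) ^ (a - 1) * exp (-z) ^ (-(a + δ)) = exp ((1 + δ) * z) := by
    rw [← rpow_add (exp_pos _), ← exp_mul]; ring_nf
  have hpow : (u * exp (-z)) ^ (a - 1) = u ^ (a - 1) * exp (-z) ^ (a - 1) :=
    mul_rpow hu.le (exp_pos _).le
  have hbase : (1 + u * exp (-z)) ^ (-(a + δ)) =
      exp (-z) ^ (-(a + δ)) * ((1 + u) ^ (-(a + δ)) * ((1 + u) / (exp z + u)) ^ (a + δ)) := by
    rw [one_add_mul_exp_neg, mul_rpow (exp_pos _).le (by positivity),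
      rpow_neg_eq_rpow_neg_mul_div_rpow (x := 1 + u) (y := exp z + u) (by positivity)
        (by positivity)]
  have hlog := rpow_neg_eq_rpow_neg_mul_div_rpow (one_add_log_one_add_pos hu.le)
    (one_add_log_one_add_pos (mul_nonneg hu.le (exp_pos (-z)).le)) (1 + b)
  unfold gShape
  rw [hpow, hbase, hlog, ← hexp]
  ring

/-- For `a, b > 0`, `δ ≥ 0`: the exact form of the scaling ratio of `g` and its
uniform bound `(max{1, e^{-z}})^{a+δ} (1 + log(1+e^z))^{1+b}`. -/
theorem gShape_scaling_ratio (a b δ : ℝ) (ha : 0 < a) (hb : 0 < b) (hδ : 0 ≤ δ)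
    (u z : ℝ) (hu : 0 < u) :
    gShape a b δ (u * Real.exp (-z)) / (gShape a b δ u * Real.exp ((1 + δ) * z))
        = ((1 + u) / (Real.exp z + u)) ^ (a + δ) *
            ((1 + Real.log (1 + u)) / (1 + Real.log (1 + u * Real.exp (-z)))) ^ (1 + b)
    ∧ ((1 + u) / (Real.exp z + u)) ^ (a + δ) *
          ((1 + Real.log (1 + u)) / (1 + Real.log (1 + u * Real.exp (-z)))) ^ (1 + b)
        ≤ (max 1 (Real.exp (-z))) ^ (a + δ) * (1 + Real.log (1 + Real.exp z)) ^ (1 + b) := by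
  have hg : gShape a b δ u * exp ((1 + δ) * z) ≠ 0 :=
    (mul_pos (gShape_pos a b δ hu) (exp_pos _)).ne'
  have hlog_ratio_nonneg : 0 ≤ (1 + log (1 + u)) / (1 + log (1 + u * exp (-z))) :=
    div_nonneg (one_add_log_one_add_pos hu.le).le
      (one_add_log_one_add_pos (mul_nonneg hu.le (exp_pos _).le)).le
  refine ⟨?_, ?_⟩
  · rw [gShape_mul_exp_neg a b δ hu z, mul_assoc (gShape a b δ u * _),
      mul_div_cancel_left₀ _ hg]
  · gcongr
    · exact div_exp_add_le_max_one_exp_neg hu.le z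
    · exact one_add_log_div_le hu.le z
end
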